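/- arXiv:2101.07359 — 5 statements merged into one kernel-verified Lean document; each statement's English description precedes it below -/
import Mathlib

section
/- Let c > 0, b ∈ ℝ, and u ≥ 0. The function f(x) = (c/2)x² − b·x + u·|x| on ℝ has the unique global minimizer x̂ = S(b, u)/c, where S is the soft-thresholding operator. -/
/-- Soft-thresholding operator `S(x, u) = sign(x) · (|x| − u)₊`. -/
noncomputable def softThresh (x u : ℝ) : ℝ := Real.sign x * max (|x| - u) 0

lemma softThresh_cases (b u : ℝ) (hu : 0 ≤ u) :
    (|b| ≤ u ∧ softThresh b u = 0) ∨ (u < b ∧ softThresh b u = b - u) ∨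
    (b < -u ∧ softThresh b u = b + u) := by
  unfold softThresh
  rcases le_or_gt (|b|) u with h | h
  · left
    exact ⟨h, by simp [max_eq_right (by linarith : |b| - u ≤ 0)]⟩
  · right
    have hmax : max (|b| - u) 0 = |b| - u := max_eq_left (by linarith)
    rcases lt_or_ge 0 b with hb | hb
    · left
      have : u < b := by rwa [abs_of_pos hb] at h
      refine ⟨this, ?_⟩
      rw [hmax, Real.sign_of_pos hb, abs_of_pos hb]; ring
    · right
      have hbneg : b < 0 := by
        rcases lt_or_eq_of_le hb with h' | h'
        · exact h'
        · exfalso; rw [h', abs_zero] at h; linarith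
      have : b < -u := by rw [abs_of_neg hbneg] at h; linarith
      refine ⟨this, ?_⟩
      rw [hmax, Real.sign_of_neg hbneg, abs_of_neg hbneg]; ring

lemma aux_min (c b u t : ℝ) (hc : 0 < c)
    (h1 : ∀ x : ℝ, 0 ≤ (c * t - b) * x + u * |x|)
    (h2 : (c * t - b) * t + u * |t| = 0) :
    (∀ x : ℝ, c / 2 * t ^ 2 - b * t + u * |t| ≤ c / 2 * x ^ 2 - b * x + u * |x|) ∧
    (∀ x : ℝ, c / 2 * x ^ 2 - b * x + u * |x| ≤ c / 2 * t ^ 2 - b * t + u * |t| → x = t) := by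
  have key : ∀ x : ℝ,
      c / 2 * t ^ 2 - b * t + u * |t| + c / 2 * (x - t) ^ 2
        ≤ c / 2 * x ^ 2 - b * x + u * |x| := by
    intro x
    nlinarith [h1 x, h2]
  constructor
  · intro x
    nlinarith [key x, mul_nonneg hc.le (sq_nonneg (x - t))]
  · intro x hle
    have hk := key x
    have hz : (x - t) ^ 2 = 0 := by nlinarith [sq_nonneg (x - t)]
    have : x - t = 0 := by
      exact pow_eq_zero_iff (two_ne_zero) |>.mp hz
    linarith

/-- For `c > 0`, `b ∈ ℝ`, `u ≥ 0`, the function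
`f(x) = (c/2)x² − b·x + u·|x|` has the unique global minimizer `S(b,u)/c`. -/
theorem stmt0 (c b u : ℝ) (hc : 0 < c) (hu : 0 ≤ u) :
    let f : ℝ → ℝ := fun x => c / 2 * x ^ 2 - b * x + u * |x|
    let xhat : ℝ := softThresh b u / c
    (∀ x : ℝ, f xhat ≤ f x) ∧ (∀ x : ℝ, f x ≤ f xhat → x = xhat) := by
  intro f xhat
  have hct : c * xhat = softThresh b u := by
    simp only [xhat]; field_simp
  have h1 : ∀ x : ℝ, 0 ≤ (c * xhat - b) * x + u * |x| := by
    intro x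
    rw [hct]
    have habs1 : -|x| ≤ x := neg_abs_le x
    have habs2 : x ≤ |x| := le_abs_self x
    rcases softThresh_cases b u hu with ⟨h, he⟩ | ⟨h, he⟩ | ⟨h, he⟩ <;> rw [he]
    · have hb1 : -u ≤ b := by have := neg_abs_le b; linarith
      have hb2 : b ≤ u := le_trans (le_abs_self b) h
      nlinarith [abs_nonneg x]
    · nlinarith
    · nlinarith
  have h2 : (c * xhat - b) * xhat + u * |xhat| = 0 := by
    rw [hct]
    rcases softThresh_cases b u hu with ⟨h, he⟩ | ⟨h, he⟩ | ⟨h, he⟩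
    · simp [xhat, he]
    · have hxh : 0 ≤ xhat := by
        simp only [xhat, he]
        exact div_nonneg (by linarith) hc.le
      rw [abs_of_nonneg hxh, he]
      simp only [xhat, he]
      field_simp
      try ring
    · have hxh : xhat ≤ 0 := by
        simp only [xhat, he]
        exact div_nonpos_of_nonpos_of_nonneg (by linarith) hc.le
      rw [abs_of_nonpos hxh, he]
      simp only [xhat, he]
      field_simp
      try ring
  exact aux_min c b u xhat hc h1 h2
end

section
/- Let n ∈ ℕ with n ≥ 1, let r, v ∈ ℝⁿ, let W = diag(w₁,…,wₙ) with wᵢ ≥ 0 and vᵀWv = Σᵢ wᵢvᵢ² > 0, and let λ' ≥ 0. Then the function f(x) = (1/(2n)) Σᵢ wᵢ (rᵢ − x·vᵢ)² + λ'·|x| on ℝ has the unique global minimizer x̂ = S(vᵀWr, n·λ') / (vᵀWv), where vᵀWr = Σᵢ wᵢvᵢrᵢ. -/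
/-! The objective is, up to the factor `1/n` and an additive constant, `g x = a/2 x² - b x + l |x|`
with `a = Σ wᵢvᵢ²`, `b = Σ wᵢvᵢrᵢ`, `l = nλ'`. The point `x̂ = S(b, l)/a` satisfies the
subgradient condition `b - a x̂ ∈ l · ∂|·|(x̂)`, and for a quadratic-plus-`ℓ¹` function this gives
`g x̂ + a/2 (x - x̂)² ≤ g x`, hence strict minimality since `a > 0`. -/

lemma softThresh_eq_zero {b l : ℝ} (h : |b| ≤ l) : softThresh b l = 0 := by
  simp [softThresh, max_eq_right (sub_nonpos.2 h)]

lemma softThresh_of_lt {b l : ℝ} (hl : 0 ≤ l) (h : l < b) : softThresh b l = b - l := by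
  have hb : 0 < b := hl.trans_lt h
  simp [softThresh, Real.sign_of_pos hb, abs_of_pos hb, max_eq_left (sub_nonneg.2 h.le)]

lemma softThresh_of_lt_neg {b l : ℝ} (hl : 0 ≤ l) (h : b < -l) : softThresh b l = b + l := by
  have hb : b < 0 := h.trans_le (neg_nonpos.2 hl)
  rw [softThresh, Real.sign_of_neg hb, abs_of_neg hb, max_eq_left (by linarith : 0 ≤ -b - l)]
  ring

lemma abs_sub_softThresh_le {b l : ℝ} (hl : 0 ≤ l) : |b - softThresh b l| ≤ l := by
  rcases le_or_gt |b| l with h | h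
  · simpa [softThresh_eq_zero h] using h
  rcases lt_abs.1 h with h | h
  · simp [softThresh_of_lt hl h, abs_of_nonneg hl]
  · simp [softThresh_of_lt_neg hl (lt_neg_of_lt_neg h), abs_of_nonneg hl]

lemma sub_softThresh_mul_softThresh {b l : ℝ} (hl : 0 ≤ l) :
    (b - softThresh b l) * softThresh b l = l * |softThresh b l| := by
  rcases le_or_gt |b| l with h | h
  · simp [softThresh_eq_zero h]
  rcases lt_abs.1 h with h | h
  · rw [softThresh_of_lt hl h, abs_of_pos (sub_pos.2 h)]
    ring
  · rw [softThresh_of_lt_neg hl (lt_neg_of_lt_neg h), abs_of_neg (by linarith)]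
    ring

lemma quadratic_growth_of_subgradient {a b l x₀ : ℝ} (hsub : |b - a * x₀| ≤ l)
    (hcompl : (b - a * x₀) * x₀ = l * |x₀|) (x : ℝ) :
    a / 2 * x₀ ^ 2 - b * x₀ + l * |x₀| + a / 2 * (x - x₀) ^ 2 ≤ a / 2 * x ^ 2 - b * x + l * |x| := by
  have hx : (b - a * x₀) * x ≤ l * |x| :=
    calc (b - a * x₀) * x ≤ |b - a * x₀| * |x| := by rw [← abs_mul]; exact le_abs_self _
      _ ≤ l * |x| := mul_le_mul_of_nonneg_right hsub (abs_nonneg x)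
  -- by `hcompl`, the gap between the two sides is exactly `l * |x| - (b - a * x₀) * x`
  linarith

lemma quadratic_growth_softThresh_div {a : ℝ} (ha : 0 < a) (b : ℝ) {l : ℝ} (hl : 0 ≤ l) (x : ℝ) :
    let x₀ := softThresh b l / a
    a / 2 * x₀ ^ 2 - b * x₀ + l * |x₀| + a / 2 * (x - x₀) ^ 2 ≤ a / 2 * x ^ 2 - b * x + l * |x| := by
  have hax₀ : a * (softThresh b l / a) = softThresh b l := mul_div_cancel₀ _ ha.ne'
  refine quadratic_growth_of_subgradient ?_ ?_ x
  · rw [hax₀]; exact abs_sub_softThresh_le hl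
  · rw [hax₀, abs_div, abs_of_pos ha, ← mul_div_assoc, ← mul_div_assoc,
      sub_softThresh_mul_softThresh hl]

lemma sum_mul_sub_mul_sq {ι : Type*} (s : Finset ι) (w r v : ι → ℝ) (x : ℝ) :
    ∑ i ∈ s, w i * (r i - x * v i) ^ 2
      = ∑ i ∈ s, w i * r i ^ 2 - 2 * x * ∑ i ∈ s, w i * v i * r i
        + x ^ 2 * ∑ i ∈ s, w i * v i ^ 2 := by
  simp only [Finset.mul_sum, ← Finset.sum_sub_distrib, ← Finset.sum_add_distrib]
  exact Finset.sum_congr rfl fun i _ => by ring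

theorem stmt2_general (n : ℕ) (hn : 1 ≤ n) (r v w : Fin n → ℝ)
    (hv : 0 < ∑ i, w i * v i ^ 2) (lam' : ℝ) (hlam' : 0 ≤ lam') :
    let f : ℝ → ℝ := fun x =>
      1 / (2 * (n : ℝ)) * ∑ i, w i * (r i - x * v i) ^ 2 + lam' * |x|
    let xhat : ℝ := softThresh (∑ i, w i * v i * r i) ((n : ℝ) * lam') / (∑ i, w i * v i ^ 2)
    (∀ x : ℝ, f xhat ≤ f x) ∧ (∀ x : ℝ, f x ≤ f xhat → x = xhat) := by
  intro f xhat
  set a := ∑ i, w i * v i ^ 2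
  set b := ∑ i, w i * v i * r i
  have hn' : (0 : ℝ) < n := by exact_mod_cast hn
  have growth (x : ℝ) : f xhat + a / 2 * (x - xhat) ^ 2 / n ≤ f x := by
    have hg := quadratic_growth_softThresh_div hv b (mul_nonneg hn'.le hlam') x
    have hf (y : ℝ) : f y = (a / 2 * y ^ 2 - b * y + n * lam' * |y|) / n
        + (∑ i, w i * r i ^ 2) / (2 * n) := by
      simp only [f, sum_mul_sub_mul_sq]
      field_simp
      ring
    have hgn := div_le_div_of_nonneg_right hg hn'.le
    rw [add_div] at hgn
    rw [hf, hf, show xhat = softThresh b (n * lam') / a from rfl]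
    linarith
  refine ⟨fun x => le_trans (le_add_of_nonneg_right (by positivity)) (growth x), fun x hx => ?_⟩
  by_contra hne
  have hgap : 0 < a / 2 * (x - xhat) ^ 2 / n := by
    have := sq_pos_of_ne_zero (sub_ne_zero.2 hne)
    positivity
  linarith [growth x]

/-- Weighted univariate lasso problem: for `n ≥ 1`, weights `wᵢ ≥ 0` with
`Σᵢ wᵢvᵢ² > 0` and `λ' ≥ 0`, the function
`f(x) = (1/(2n)) Σᵢ wᵢ (rᵢ − x·vᵢ)² + λ'·|x|` has the unique global minimizer
`x̂ = S(Σᵢ wᵢvᵢrᵢ, n·λ') / (Σᵢ wᵢvᵢ²)`. -/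
theorem stmt2 (n : ℕ) (hn : 1 ≤ n) (r v w : Fin n → ℝ) (hw : ∀ i, 0 ≤ w i)
    (hv : 0 < ∑ i, w i * v i ^ 2) (lam' : ℝ) (hlam' : 0 ≤ lam') :
    let f : ℝ → ℝ := fun x =>
      1 / (2 * (n : ℝ)) * ∑ i, w i * (r i - x * v i) ^ 2 + lam' * |x|
    let xhat : ℝ := softThresh (∑ i, w i * v i * r i) ((n : ℝ) * lam') / (∑ i, w i * v i ^ 2)
    (∀ x : ℝ, f xhat ≤ f x) ∧ (∀ x : ℝ, f x ≤ f xhat → x = xhat) :=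
  stmt2_general n hn r v w hv lam' hlam'
end

section
/- Fix β ∈ ℝᵖ and τ ∈ ℝᵖ, and let v = A + Σⱼ τⱼβⱼ (A ∘ Xⱼ) ∈ ℝⁿ. If vᵀWv = Σᵢ wᵢvᵢ² > 0, then the function ψ₀ ↦ Q(β₁,…,β_p, ψ₀, τ₁,…,τ_p) has the unique global minimizer ψ̂₀ = S(vᵀW R₍₋A₎, n·λ(1−α)) / (vᵀWv), where vᵀW R₍₋A₎ = Σᵢ wᵢ vᵢ (R₍₋A₎)ᵢ. -/
/-- Reparametrized weighted loss
`L*(θ) = (1/(2n)) Σᵢ wᵢ (Yᵢ − ψ₀Aᵢ − Σⱼ Xᵢⱼβⱼ − Σⱼ ψ₀τⱼβⱼ AᵢXᵢⱼ)²`. -/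
noncomputable def Lstar (n p : ℕ) (Y A : Fin n → ℝ) (X : Fin n → Fin p → ℝ)
    (w : Fin n → ℝ) (β : Fin p → ℝ) (ψ0 : ℝ) (τ : Fin p → ℝ) : ℝ :=
  1 / (2 * (n : ℝ)) * ∑ i, w i *
    (Y i - ψ0 * A i - (∑ j, X i j * β j) - ∑ j, ψ0 * τ j * β j * A i * X i j) ^ 2

/-- Penalized objective
`Q(θ) = L*(θ) + λ(1−α)(Σⱼ|βⱼ| + |ψ₀|) + λα Σⱼ|τⱼ|`. -/
noncomputable def Qobj (n p : ℕ) (Y A : Fin n → ℝ) (X : Fin n → Fin p → ℝ)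
    (w : Fin n → ℝ) (lam alpha : ℝ) (β : Fin p → ℝ) (ψ0 : ℝ) (τ : Fin p → ℝ) : ℝ :=
  Lstar n p Y A X w β ψ0 τ
    + lam * (1 - alpha) * ((∑ j, |β j|) + |ψ0|) + lam * alpha * ∑ j, |τ j|

lemma key_lemma (a b μ : ℝ) (ha : 0 < a) (hμ : 0 ≤ μ) (t : ℝ)
    (ht : t ≠ softThresh b μ / a) :
    a/2 * (softThresh b μ / a)^2 - b * (softThresh b μ / a) + μ * |softThresh b μ / a|
      < a/2 * t^2 - b * t + μ * |t| := by
  set s := softThresh b μ / a with hs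
  have hts : 0 < (t - s)^2 := lt_of_le_of_ne (sq_nonneg _) (Ne.symm (pow_ne_zero 2 (sub_ne_zero.mpr ht)))
  by_cases hb1 : μ < b
  · have hbpos : 0 < b := lt_of_le_of_lt hμ hb1
    have hst : softThresh b μ = b - μ := by
      rw [softThresh, Real.sign_of_pos hbpos, abs_of_pos hbpos, max_eq_left (by linarith)]
      ring
    have hs0 : 0 ≤ s := by rw [hs, hst]; exact div_nonneg (by linarith) ha.le
    have has : a * s = b - μ := by rw [hs, hst]; field_simp
    rw [abs_of_nonneg hs0]
    have p1 : 0 < a/2 * (t - s)^2 := by positivity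
    have p2 : 0 ≤ μ * (|t| - t) := mul_nonneg hμ (by linarith [le_abs_self t])
    nlinarith [p1, p2, has]
  · by_cases hb2 : b < -μ
    · have hbneg : b < 0 := lt_of_lt_of_le hb2 (by linarith)
      have hst : softThresh b μ = b + μ := by
        rw [softThresh, Real.sign_of_neg hbneg, abs_of_neg hbneg, max_eq_left (by linarith)]
        ring
      have hs0 : s ≤ 0 := by rw [hs, hst]; exact div_nonpos_of_nonpos_of_nonneg (by linarith) ha.le
      have has : a * s = b + μ := by rw [hs, hst]; field_simp
      rw [abs_of_nonpos hs0]
      have p1 : 0 < a/2 * (t - s)^2 := by positivity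
      have p2 : 0 ≤ μ * (|t| + t) := mul_nonneg hμ (by linarith [neg_abs_le t])
      nlinarith [p1, p2, has]
    · push_neg at hb1 hb2
      have habs : |b| ≤ μ := abs_le.mpr ⟨by linarith, hb1⟩
      have hst : softThresh b μ = 0 := by
        rw [softThresh, max_eq_right (by linarith)]; ring
      have hs0 : s = 0 := by rw [hs, hst]; simp
      rw [hs0]
      simp only [abs_zero]
      have hbt : b * t ≤ μ * |t| := by
        calc b * t ≤ |b * t| := le_abs_self _
        _ = |b| * |t| := abs_mul b t
        _ ≤ μ * |t| := mul_le_mul_of_nonneg_right habs (abs_nonneg t)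
      have ht0 : t ≠ 0 := by rw [hs0] at ht; exact ht
      have : 0 < t^2 := lt_of_le_of_ne (sq_nonneg _) (Ne.symm (pow_ne_zero 2 ht0))
      nlinarith [mul_pos (half_pos ha) this]

/-- Coordinate update for `ψ₀`: with `β`, `τ` fixed and
`v = A + Σⱼ τⱼβⱼ (A ∘ Xⱼ)` satisfying `vᵀWv > 0`, the map
`ψ₀ ↦ Q(β, ψ₀, τ)` has unique global minimizer
`ψ̂₀ = S(vᵀW R₍₋A₎, n·λ(1−α)) / (vᵀWv)`. -/
theorem stmt3 (n p : ℕ) (hn : 1 ≤ n) (Y A : Fin n → ℝ) (X : Fin n → Fin p → ℝ)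
    (w : Fin n → ℝ) (hw : ∀ i, 0 ≤ w i) (hA : ∀ i, A i = 0 ∨ A i = 1)
    (lam alpha : ℝ) (hlam : 0 ≤ lam) (halpha : 0 < alpha ∧ alpha < 1)
    (β τ : Fin p → ℝ)
    (v : Fin n → ℝ) (hv : v = fun i => A i + ∑ j, τ j * β j * A i * X i j)
    (hpos : 0 < ∑ i, w i * v i ^ 2) :
    let RA : Fin n → ℝ := fun i => Y i - ∑ j, X i j * β j
    let f : ℝ → ℝ := fun t => Qobj n p Y A X w lam alpha β t τ
    let psihat : ℝ :=
      softThresh (∑ i, w i * v i * RA i) ((n : ℝ) * (lam * (1 - alpha))) /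
        (∑ i, w i * v i ^ 2)
    (∀ t : ℝ, f psihat ≤ f t) ∧ (∀ t : ℝ, f t ≤ f psihat → t = psihat) := by
  intro RA f psihat
  have hn0 : (0:ℝ) < n := by exact_mod_cast hn
  set a := ∑ i, w i * v i ^ 2 with ha
  set b := ∑ i, w i * v i * RA i with hb
  set μ := lam * (1 - alpha) with hμdef
  have hμ : 0 ≤ μ := mul_nonneg hlam (by linarith [halpha.2])
  have hnμ : 0 ≤ (n:ℝ) * μ := mul_nonneg hn0.le hμ
  have hpsi : psihat = softThresh b ((n:ℝ) * μ) / a := rfl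
  have hresid : ∀ (t : ℝ) (i : Fin n),
      Y i - t * A i - (∑ j, X i j * β j) - (∑ j, t * τ j * β j * A i * X i j)
        = RA i - t * v i := by
    intro t i
    have h1 : ∑ j, t * τ j * β j * A i * X i j
        = t * ∑ j, τ j * β j * A i * X i j := by
      rw [Finset.mul_sum]; exact Finset.sum_congr rfl fun j _ => by ring
    simp only [RA, hv, h1]; ring
  have fform : ∀ t : ℝ, f t = (1/(n:ℝ)) * (a/2 * t^2 - b*t + ((n:ℝ)*μ)*|t|)
      + ((1/(2*(n:ℝ))) * (∑ i, w i * RA i ^ 2) + μ * (∑ j, |β j|)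
        + lam * alpha * ∑ j, |τ j|) := by
    intro t
    show Qobj n p Y A X w lam alpha β t τ = _
    rw [Qobj, Lstar]
    have h2 : ∑ i, w i *
        (Y i - t * A i - (∑ j, X i j * β j) - ∑ j, t * τ j * β j * A i * X i j) ^ 2
        = (∑ i, w i * RA i ^ 2) - 2*t*b + t^2*a := by
      rw [hb, ha, Finset.mul_sum, Finset.mul_sum, ← Finset.sum_sub_distrib,
        ← Finset.sum_add_distrib]
      exact Finset.sum_congr rfl fun i _ => by rw [hresid t i]; ring
    rw [h2]
    field_simp
    ring
  have hstrict : ∀ t : ℝ, t ≠ psihat → f psihat < f t := by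
    intro t ht
    have key := key_lemma a b ((n:ℝ)*μ) hpos hnμ t (by rw [← hpsi]; exact ht)
    rw [← hpsi] at key
    rw [fform psihat, fform t]
    have h1n : (0:ℝ) < 1/(n:ℝ) := by positivity
    have := mul_lt_mul_of_pos_left key h1n
    linarith
  constructor
  · intro t
    by_cases h : t = psihat
    · rw [h]
    · exact (hstrict t h).le
  · intro t hle
    by_contra h
    exact absurd hle (not_le.mpr (hstrict t h))
end

section
/- Fix j ∈ {1,…,p}, fix ψ₀ ∈ ℝ, τ ∈ ℝᵖ, and β_ℓ for ℓ ≠ j, and let vⱼ = Xⱼ + τⱼψ₀ (A ∘ Xⱼ) ∈ ℝⁿ. Then βⱼ = 0 is a global minimizer of the function βⱼ ↦ Q(β₁,…,β_p, ψ₀, τ₁,…,τ_p) if and only if |(1/n)·vⱼᵀW R₍₋ⱼ₎| ≤ λ(1−α), where vⱼᵀW R₍₋ⱼ₎ = Σᵢ wᵢ (vⱼ)ᵢ (R₍₋ⱼ₎)ᵢ. -/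
open Finset

lemma forall_nonneg_sq_sub_add_abs_iff {a b μ : ℝ} (ha : 0 ≤ a) :
    (∀ t : ℝ, 0 ≤ a * t ^ 2 - b * t + μ * |t|) ↔ |b| ≤ μ := by
  constructor
  · intro h
    refine le_of_forall_pos_le_add fun ε hε => ?_
    set t := ε / (a + 1)
    have ht : 0 < t := by positivity
    have hat : a * t ≤ ε := by
      rw [mul_div_assoc', div_le_iff₀ (by positivity)]
      nlinarith
    have hpos := h t
    have hneg := h (-t)
    rw [abs_of_pos ht] at hpos
    rw [abs_neg, abs_of_pos ht] at hneg
    have hbt : |b| * t ≤ (μ + a * t) * t := by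
      rcases abs_cases b with ⟨hb, _⟩ | ⟨hb, _⟩ <;> rw [hb] <;> nlinarith
    linarith [le_of_mul_le_mul_right hbt ht]
  · intro h t
    have hlin : b * t ≤ μ * |t| :=
      calc b * t ≤ |b * t| := le_abs_self _
        _ = |b| * |t| := abs_mul _ _
        _ ≤ μ * |t| := mul_le_mul_of_nonneg_right h (abs_nonneg t)
    nlinarith [mul_nonneg ha (sq_nonneg t)]

lemma Fintype.sum_update_apply {ι α M : Type*} [Fintype ι] [DecidableEq ι] [AddCommMonoid M]
    (g : ι → α → M) (β : ι → α) (j : ι) (t : α) :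
    ∑ l, g l (Function.update β j t l) = g j t + ∑ l ∈ univ.erase j, g l (β l) := by
  rw [← add_sum_erase _ _ (mem_univ j), Function.update_self]
  congr 1
  refine Finset.sum_congr rfl fun l hl => ?_
  rw [Function.update_of_ne (ne_of_mem_erase hl)]

lemma sum_mul_sub_mul_sq_sub_sum_mul_sq {ι : Type*} (s : Finset ι) (w r v : ι → ℝ) (t : ℝ) :
    ∑ i ∈ s, w i * (r i - t * v i) ^ 2 - ∑ i ∈ s, w i * r i ^ 2
      = (∑ i ∈ s, w i * v i ^ 2) * t ^ 2 - 2 * (∑ i ∈ s, w i * v i * r i) * t := by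
  simp only [← sum_sub_distrib, sum_mul, mul_sum, ← sum_sub_distrib]
  exact sum_congr rfl fun i _ => by ring

section Coordinate

variable {n p : ℕ} (Y A : Fin n → ℝ) (X : Fin n → Fin p → ℝ) (w : Fin n → ℝ)
  (β τ : Fin p → ℝ) (ψ0 : ℝ) (j : Fin p)

def partialResidual : Fin n → ℝ := fun i =>
  Y i - (∑ l ∈ univ.erase j, X i l * β l) - ψ0 * A i
    - ∑ l ∈ univ.erase j, ψ0 * τ l * β l * A i * X i l

def coordDirection : Fin n → ℝ := fun i => X i j + τ j * ψ0 * A i * X i j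

lemma Lstar_update (t : ℝ) :
    Lstar n p Y A X w (Function.update β j t) ψ0 τ
      = 1 / (2 * n) * ∑ i, w i *
          (partialResidual Y A X β τ ψ0 j i - t * coordDirection A X τ ψ0 j i) ^ 2 := by
  unfold Lstar
  congr 1
  refine sum_congr rfl fun i _ => ?_
  rw [Fintype.sum_update_apply (fun l b => X i l * b),
    Fintype.sum_update_apply (fun l b => ψ0 * τ l * b * A i * X i l)]
  simp only [partialResidual, coordDirection]
  ring

lemma Qobj_update_sub_Qobj_update_zero (lam alpha t : ℝ) :
    Qobj n p Y A X w lam alpha (Function.update β j t) ψ0 τ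
        - Qobj n p Y A X w lam alpha (Function.update β j 0) ψ0 τ
      = (1 / (2 * n) * ∑ i, w i * coordDirection A X τ ψ0 j i ^ 2) * t ^ 2
        - (1 / n * ∑ i, w i * coordDirection A X τ ψ0 j i
            * partialResidual Y A X β τ ψ0 j i) * t
        + lam * (1 - alpha) * |t| := by
  have hloss := sum_mul_sub_mul_sq_sub_sum_mul_sq univ w (partialResidual Y A X β τ ψ0 j)
    (coordDirection A X τ ψ0 j) t
  unfold Qobj
  rw [Lstar_update, Lstar_update, Fintype.sum_update_apply (fun _ b => |b|),
    Fintype.sum_update_apply (fun _ b => |b|), abs_zero]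
  simp only [zero_mul, sub_zero]
  linear_combination 1 / (2 * (n : ℝ)) * hloss

end Coordinate

theorem stmt7_general (n p : ℕ) (Y A : Fin n → ℝ) (X : Fin n → Fin p → ℝ)
    (w : Fin n → ℝ) (hw : ∀ i, 0 ≤ w i)
    (lam alpha : ℝ)
    (j : Fin p) (ψ0 : ℝ) (β τ : Fin p → ℝ)
    (vj : Fin n → ℝ) (hvj : vj = fun i => X i j + τ j * ψ0 * A i * X i j) :
    let Rmj : Fin n → ℝ := fun i =>
      Y i - (∑ l ∈ Finset.univ.erase j, X i l * β l) - ψ0 * A i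
        - ∑ l ∈ Finset.univ.erase j, ψ0 * τ l * β l * A i * X i l
    let f : ℝ → ℝ := fun t => Qobj n p Y A X w lam alpha (Function.update β j t) ψ0 τ
    (∀ t : ℝ, f 0 ≤ f t) ↔
      |1 / (n : ℝ) * ∑ i, w i * vj i * Rmj i| ≤ lam * (1 - alpha) := by
  intro Rmj f
  have hdiff : ∀ t, f t - f 0 = _ := Qobj_update_sub_Qobj_update_zero Y A X w β τ ψ0 j lam alpha
  have hcurv : 0 ≤ 1 / (2 * (n : ℝ)) * ∑ i, w i * coordDirection A X τ ψ0 j i ^ 2 :=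
    mul_nonneg (by positivity) (sum_nonneg fun i _ => mul_nonneg (hw i) (sq_nonneg _))
  subst hvj
  simp only [← sub_nonneg (b := f _), hdiff]
  exact forall_nonneg_sq_sub_add_abs_iff hcurv

/-- With `ψ₀`, `τ`, and `β_ℓ (ℓ ≠ j)` fixed and `vⱼ = Xⱼ + τⱼψ₀ (A ∘ Xⱼ)`,
`βⱼ = 0` is a global minimizer of `βⱼ ↦ Q(β, ψ₀, τ)` iff
`|(1/n)·vⱼᵀW R₍₋ⱼ₎| ≤ λ(1−α)`. -/
theorem stmt7 (n p : ℕ) (hn : 1 ≤ n) (Y A : Fin n → ℝ) (X : Fin n → Fin p → ℝ)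
    (w : Fin n → ℝ) (hw : ∀ i, 0 ≤ w i) (hA : ∀ i, A i = 0 ∨ A i = 1)
    (lam alpha : ℝ) (hlam : 0 ≤ lam) (halpha : 0 < alpha ∧ alpha < 1)
    (j : Fin p) (ψ0 : ℝ) (β τ : Fin p → ℝ)
    (vj : Fin n → ℝ) (hvj : vj = fun i => X i j + τ j * ψ0 * A i * X i j) :
    let Rmj : Fin n → ℝ := fun i =>
      Y i - (∑ l ∈ Finset.univ.erase j, X i l * β l) - ψ0 * A i
        - ∑ l ∈ Finset.univ.erase j, ψ0 * τ l * β l * A i * X i l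
    let f : ℝ → ℝ := fun t => Qobj n p Y A X w lam alpha (Function.update β j t) ψ0 τ
    (∀ t : ℝ, f 0 ≤ f t) ↔
      |1 / (n : ℝ) * ∑ i, w i * vj i * Rmj i| ≤ lam * (1 - alpha) :=
  stmt7_general n p Y A X w hw lam alpha j ψ0 β τ vj hvj
end

section
/- For every fixed ψ₀ ∈ ℝ and τ ∈ ℝᵖ, the map (β₁,…,β_p) ↦ Q(β₁,…,β_p, ψ₀, τ₁,…,τ_p) is a convex function on ℝᵖ; and for every fixed ψ₀ ∈ ℝ and β ∈ ℝᵖ, the map (τ₁,…,τ_p) ↦ Q(β₁,…,β_p, ψ₀, τ₁,…,τ_p) is a convex function on ℝᵖ. -/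
/-!
For fixed `ψ₀`, the interaction term `ψ₀ τⱼ βⱼ Aᵢ Xᵢⱼ` is bilinear in `(β, τ)`, so each residual
`Yᵢ − ψ₀Aᵢ − ⟨Xᵢ, β⟩ − ψ₀Aᵢ⟨τ ∘ Xᵢ, β⟩` is affine in `β` for fixed `τ` and affine in `τ` for
fixed `β`. In either block `L*` is therefore a weighted least-squares objective with nonnegative
weights, hence convex, and the `ℓ¹` penalties are convex with nonnegative coefficients
`λ(1−α)` and `λα`.
-/

section FinsetSum

variable {𝕜 E β ι : Type*} [Semiring 𝕜] [PartialOrder 𝕜] [AddCommMonoid E] [SMul 𝕜 E]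
  [AddCommMonoid β] [PartialOrder β] [IsOrderedAddMonoid β] [Module 𝕜 β]

theorem ConvexOn.finset_sum {s : Set E} (hs : Convex 𝕜 s) (t : Finset ι) {f : ι → E → β}
    (hf : ∀ i ∈ t, ConvexOn 𝕜 s (f i)) : ConvexOn 𝕜 s fun x => ∑ i ∈ t, f i x := by
  classical
  induction t using Finset.induction_on with
  | empty => simpa using convexOn_const 0 hs
  | insert a t ha ih =>
    simp only [Finset.sum_insert ha]
    exact (hf a (Finset.mem_insert_self a t)).add
      (ih fun i hi => hf i (Finset.mem_insert_of_mem hi))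

end FinsetSum

section LeastSquares

open Matrix

variable {ι κ : Type*} [Fintype ι] [Fintype κ]

theorem convexOn_sq_sub_dotProduct (c : ℝ) (v : κ → ℝ) :
    ConvexOn ℝ Set.univ fun x : κ → ℝ => (c - v ⬝ᵥ x) ^ 2 :=
  (Even.convexOn_pow even_two).comp_affineMap
    (AffineMap.const ℝ (κ → ℝ) c - (dotProductBilin ℝ ℝ v).toAffineMap)

theorem convexOn_weighted_sum_sq_sub_dotProduct {w : ι → ℝ} (hw : ∀ i, 0 ≤ w i)
    (c : ι → ℝ) (v : ι → κ → ℝ) :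
    ConvexOn ℝ Set.univ fun x : κ → ℝ => ∑ i, w i * (c i - v i ⬝ᵥ x) ^ 2 :=
  ConvexOn.finset_sum convex_univ _ fun i _ =>
    (convexOn_sq_sub_dotProduct (c i) (v i)).smul (hw i)

theorem convexOn_sum_abs : ConvexOn ℝ Set.univ fun x : κ → ℝ => ∑ j, |x j| :=
  ConvexOn.finset_sum convex_univ _ fun j _ =>
    convexOn_univ_norm.comp_affineMap (LinearMap.proj j : (κ → ℝ) →ₗ[ℝ] ℝ).toAffineMap

end LeastSquares

section Lstar

open Matrix

variable (n p : ℕ) (Y A : Fin n → ℝ) (X : Fin n → Fin p → ℝ)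

theorem Lstar_eq_sum_sq_sub_dotProduct_beta (w : Fin n → ℝ) (β : Fin p → ℝ) (ψ0 : ℝ)
    (τ : Fin p → ℝ) :
    Lstar n p Y A X w β ψ0 τ = 1 / (2 * (n : ℝ)) * ∑ i, w i *
      ((Y i - ψ0 * A i) - (fun j => X i j + ψ0 * τ j * A i * X i j) ⬝ᵥ β) ^ 2 := by
  unfold Lstar
  congr 1
  refine Finset.sum_congr rfl fun i _ => ?_
  simp only [dotProduct, add_mul, Finset.sum_add_distrib, sub_sub, add_assoc]
  congr 5
  exact Finset.sum_congr rfl fun j _ => by ring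

theorem Lstar_eq_sum_sq_sub_dotProduct_tau (w : Fin n → ℝ) (β : Fin p → ℝ) (ψ0 : ℝ)
    (τ : Fin p → ℝ) :
    Lstar n p Y A X w β ψ0 τ = 1 / (2 * (n : ℝ)) * ∑ i, w i *
      ((Y i - ψ0 * A i - ∑ j, X i j * β j) - (fun j => ψ0 * β j * A i * X i j) ⬝ᵥ τ) ^ 2 := by
  unfold Lstar
  congr 1
  refine Finset.sum_congr rfl fun i _ => ?_
  simp only [dotProduct]
  congr 3
  exact Finset.sum_congr rfl fun j _ => by ring

theorem convexOn_Lstar_beta {w : Fin n → ℝ} (hw : ∀ i, 0 ≤ w i) (ψ0 : ℝ) (τ : Fin p → ℝ) :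
    ConvexOn ℝ Set.univ fun β => Lstar n p Y A X w β ψ0 τ := by
  simp only [Lstar_eq_sum_sq_sub_dotProduct_beta]
  exact (convexOn_weighted_sum_sq_sub_dotProduct hw _ _).smul (by positivity)

theorem convexOn_Lstar_tau {w : Fin n → ℝ} (hw : ∀ i, 0 ≤ w i) (ψ0 : ℝ) (β : Fin p → ℝ) :
    ConvexOn ℝ Set.univ fun τ => Lstar n p Y A X w β ψ0 τ := by
  simp only [Lstar_eq_sum_sq_sub_dotProduct_tau]
  exact (convexOn_weighted_sum_sq_sub_dotProduct hw _ _).smul (by positivity)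

end Lstar

theorem stmt11_general (n p : ℕ) (Y A : Fin n → ℝ) (X : Fin n → Fin p → ℝ)
    (w : Fin n → ℝ) (hw : ∀ i, 0 ≤ w i)
    (lam alpha : ℝ) (hlam : 0 ≤ lam) (halpha : 0 < alpha ∧ alpha < 1) :
    (∀ (ψ0 : ℝ) (τ : Fin p → ℝ),
      ConvexOn ℝ Set.univ fun β : Fin p → ℝ => Qobj n p Y A X w lam alpha β ψ0 τ) ∧
    (∀ (ψ0 : ℝ) (β : Fin p → ℝ),
      ConvexOn ℝ Set.univ fun τ : Fin p → ℝ => Qobj n p Y A X w lam alpha β ψ0 τ) := by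
  have hβ : 0 ≤ lam * (1 - alpha) := mul_nonneg hlam (sub_nonneg.2 halpha.2.le)
  have hτ : 0 ≤ lam * alpha := mul_nonneg hlam halpha.1.le
  refine ⟨fun ψ0 τ => ?_, fun ψ0 β => ?_⟩
  · exact ((convexOn_Lstar_beta n p Y A X hw ψ0 τ).add
      ((convexOn_sum_abs.add (convexOn_const _ convex_univ)).smul hβ)).add
      (convexOn_const _ convex_univ)
  · exact ((convexOn_Lstar_tau n p Y A X hw ψ0 β).add
      (convexOn_const _ convex_univ)).add (convexOn_sum_abs.smul hτ)

/-- Blockwise convexity of `Q`: for fixed `ψ₀, τ` the map `β ↦ Q(β, ψ₀, τ)` is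
convex on `ℝᵖ`, and for fixed `ψ₀, β` the map `τ ↦ Q(β, ψ₀, τ)` is convex on `ℝᵖ`. -/
theorem stmt11 (n p : ℕ) (hn : 1 ≤ n) (Y A : Fin n → ℝ) (X : Fin n → Fin p → ℝ)
    (w : Fin n → ℝ) (hw : ∀ i, 0 ≤ w i) (hA : ∀ i, A i = 0 ∨ A i = 1)
    (lam alpha : ℝ) (hlam : 0 ≤ lam) (halpha : 0 < alpha ∧ alpha < 1) :
    (∀ (ψ0 : ℝ) (τ : Fin p → ℝ),
      ConvexOn ℝ Set.univ fun β : Fin p → ℝ => Qobj n p Y A X w lam alpha β ψ0 τ) ∧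
    (∀ (ψ0 : ℝ) (β : Fin p → ℝ),
      ConvexOn ℝ Set.univ fun τ : Fin p → ℝ => Qobj n p Y A X w lam alpha β ψ0 τ) :=
  stmt11_general n p Y A X w hw lam alpha hlam halpha
end
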